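/- arXiv:2002.02149 — 2 statements merged into one kernel-verified Lean document; each statement's English description precedes it below -/
import Mathlib

section
/- Let Q be a d×d matrix with nonnegative entries and row sums strictly less than 1, and let x, L ∈ ℝ₊^d, m ∈ ℝ₊^d. Define φ(x,L) = min over (y,b) with 0 ≤ y, L - y - m ≤ b·𝟏, (I-Qᵀ)y ≤ x, of b. Then φ(x,L) = max_{i=1,…,d} ( L_i - e_iᵀ(I-Qᵀ)⁻¹x - m_i ), where e_i is the i-th standard basis vector. -/
open Matrix BigOperators

/-!
A nonnegative `Q` with row sums below `1` makes `1 - Q` inverse-positive: if `w` attains its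
minimum at `k` with `w k < 0`, then `((1 - Q) *ᵥ w) k ≤ (1 - ∑ j, Q k j) * w k < 0`. Inverse
positivity passes to the transpose, so every feasible `y` satisfies `y ≤ (1 - Qᵀ)⁻¹ *ᵥ x`,
which is itself feasible because `x ≥ 0`; the least budget is thus attained at that `y`.
-/

namespace Matrix

variable {ι : Type*} [Fintype ι]

lemma mulVec_nonneg_of_nonneg {A : Matrix ι ι ℝ} (hA : ∀ i j, 0 ≤ A i j) {v : ι → ℝ}
    (hv : 0 ≤ v) : 0 ≤ A *ᵥ v :=
  fun i => Finset.sum_nonneg fun j _ => mul_nonneg (hA i j) (hv j)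

variable [DecidableEq ι]

section Substochastic

variable {Q : Matrix ι ι ℝ} (hQ : ∀ i j, 0 ≤ Q i j) (hrow : ∀ i, ∑ j, Q i j < 1)
include hQ hrow

lemma nonneg_of_one_sub_mulVec_nonneg {w : ι → ℝ} (h : 0 ≤ (1 - Q) *ᵥ w) : 0 ≤ w := by
  rw [Pi.le_def]
  by_contra! hneg
  obtain ⟨i₀, hi₀⟩ := hneg
  obtain ⟨k, -, hk⟩ := Finset.exists_min_image Finset.univ w ⟨i₀, Finset.mem_univ i₀⟩
  have hwk : w k < 0 := (hk i₀ (Finset.mem_univ i₀)).trans_lt hi₀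
  have hQw : (Q *ᵥ w) k ≤ w k := by
    simpa [sub_mulVec] using h k
  have hmin : (∑ j, Q k j) * w k ≤ (Q *ᵥ w) k := by
    rw [Finset.sum_mul]
    exact Finset.sum_le_sum fun j _ =>
      mul_le_mul_of_nonneg_left (hk j (Finset.mem_univ j)) (hQ k j)
  nlinarith [hrow k]

lemma isUnit_one_sub : IsUnit (1 - Q) := by
  refine mulVec_injective_iff_isUnit.1 fun v w hvw => le_antisymm ?_ ?_ <;>
    refine sub_nonneg.1 (nonneg_of_one_sub_mulVec_nonneg hQ hrow ?_) <;>
    simp [mulVec_sub, hvw]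

lemma one_sub_inv_nonneg (i j : ι) : 0 ≤ (1 - Q)⁻¹ i j := by
  have hcol : 0 ≤ (1 - Q)⁻¹ *ᵥ Pi.single j 1 := by
    refine nonneg_of_one_sub_mulVec_nonneg hQ hrow ?_
    rw [mulVec_mulVec, mul_nonsing_inv _ ((isUnit_one_sub hQ hrow).map detMonoidHom),
      one_mulVec]
    exact Pi.single_nonneg.2 zero_le_one
  simpa [mulVec_single] using hcol i

lemma isUnit_one_sub_transpose : IsUnit (1 - Qᵀ) := by
  rw [← transpose_one, ← transpose_sub, isUnit_transpose]
  exact isUnit_one_sub hQ hrow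

lemma one_sub_transpose_inv_nonneg (i j : ι) : 0 ≤ (1 - Qᵀ)⁻¹ i j := by
  rw [← transpose_one, ← transpose_sub, ← transpose_nonsing_inv]
  exact one_sub_inv_nonneg hQ hrow j i

end Substochastic

section InversePositive

variable {A : Matrix ι ι ℝ} (hA : IsUnit A) (hinv : ∀ i j, 0 ≤ A⁻¹ i j)
include hA hinv

lemma le_of_mulVec_le_mulVec {v w : ι → ℝ} (h : A *ᵥ v ≤ A *ᵥ w) : v ≤ w := by
  have := mulVec_nonneg_of_nonneg hinv (sub_nonneg.2 h)
  rwa [← mulVec_sub, mulVec_mulVec, nonsing_inv_mul _ (hA.map detMonoidHom), one_mulVec,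
    sub_nonneg] at this

lemma isLeast_setOf_exists_mulVec_le [Nonempty ι] {x : ι → ℝ} (hx : 0 ≤ x) (L m : ι → ℝ) :
    IsLeast {b : ℝ | ∃ y : ι → ℝ, 0 ≤ y ∧ (∀ i, L i - y i - m i ≤ b) ∧ A *ᵥ y ≤ x}
      (⨆ i, L i - (A⁻¹ *ᵥ x) i - m i) := by
  set z := A⁻¹ *ᵥ x
  have hAz : A *ᵥ z = x := by
    rw [mulVec_mulVec, mul_nonsing_inv _ (hA.map detMonoidHom), one_mulVec]
  have hbdd : BddAbove (Set.range fun i => L i - z i - m i) := (Set.finite_range _).bddAbove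
  refine ⟨⟨z, mulVec_nonneg_of_nonneg hinv hx, fun i => le_ciSup hbdd i, hAz.le⟩, ?_⟩
  rintro b ⟨y, -, hyb, hyx⟩
  have hyz : y ≤ z := le_of_mulVec_le_mulVec hA hinv (hAz ▸ hyx)
  exact ciSup_le fun i => le_trans (by linarith [hyz i]) (hyb i)

end InversePositive

end Matrix

theorem stmt_7_general (d : ℕ) [NeZero d] (Q : Matrix (Fin d) (Fin d) ℝ)
    (hnn : ∀ i j, 0 ≤ Q i j) (hrow : ∀ i, ∑ j, Q i j < 1)
    (x L m : Fin d → ℝ) (hx : ∀ i, 0 ≤ x i) :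
    sInf {b : ℝ | ∃ y : Fin d → ℝ, (∀ i, 0 ≤ y i) ∧ (∀ i, L i - y i - m i ≤ b) ∧
        (∀ i, ((1 - Qᵀ) *ᵥ y) i ≤ x i)} =
      ⨆ i : Fin d, (L i - ((1 - Qᵀ)⁻¹ *ᵥ x) i - m i) :=
  (isLeast_setOf_exists_mulVec_le (isUnit_one_sub_transpose hnn hrow)
    (one_sub_transpose_inv_nonneg hnn hrow) hx L m).csInf_eq

/-- Closed form for the minimal salvage fund constraint function:
the LP value min{b : 0 ≤ y, L - y - m ≤ b·𝟏, (I-Qᵀ)y ≤ x} equals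
max_i (L_i - e_iᵀ(I-Qᵀ)⁻¹x - m_i). -/
theorem stmt_7 (d : ℕ) [NeZero d] (Q : Matrix (Fin d) (Fin d) ℝ)
    (hnn : ∀ i j, 0 ≤ Q i j) (hrow : ∀ i, ∑ j, Q i j < 1)
    (x L m : Fin d → ℝ) (hx : ∀ i, 0 ≤ x i) (hL : ∀ i, 0 ≤ L i) (hm : ∀ i, 0 ≤ m i) :
    sInf {b : ℝ | ∃ y : Fin d → ℝ, (∀ i, 0 ≤ y i) ∧ (∀ i, L i - y i - m i ≤ b) ∧
        (∀ i, ((1 - Qᵀ) *ᵥ y) i ≤ x i)} =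
      ⨆ i : Fin d, (L i - ((1 - Qᵀ)⁻¹ *ᵥ x) i - m i) :=
  stmt_7_general d Q hnn hrow x L m hx
end

section
/- Let L be a random vector in ℝ^{d_l}, φ₋(x,l) = max_{i=1,…,N}(a_iᵀl + b_iᵀx + c_i) with φ₋ ≤ φ pointwise, and suppose φ₋(x,l) ≤ -C implies φ(x,l) ≤ 0. Define O_δ = ∩_{i=1}^N {x : b_iᵀx + c_i + q_i(δ) ≤ 0} where q_i(δ) = inf{t : P(a_iᵀL > t) ≤ δ}, and C_δ = ∪_{i=1}^N {l : a_iᵀl + C > q_i(δ)}. Then (a) every x with P(φ(x,L) > 0) ≤ δ belongs to O_δ, and (b) for every x ∈ O_δ, φ(x,l) > 0 implies l ∈ C_δ. -/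
open Matrix BigOperators MeasureTheory

/-
Since φ₋ ≤ φ, the event {φ(x,L) > 0} contains {a_iᵀL > -(b_iᵀx + c_i)} for every i, so a chance
constraint of level δ puts -(b_iᵀx + c_i) among the levels t with P(a_iᵀL > t) ≤ δ, whence
q_i(δ) ≤ -(b_iᵀx + c_i). Conversely, if φ(x,l) > 0 then φ₋(x,l) > -C, and the maximizing index i
gives a_iᵀl + C > -(b_iᵀx + c_i) ≥ q_i(δ). The infimum defining q_i(δ) is a genuine one (not the
junk value of `sInf` on an unbounded set) because δ < 1 and the events {a_iᵀL > t} exhaust Ω as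
t → -∞.
-/

/-- The quantile `q_i(δ)` of the paper is `upperQuantile μ (fun ω => a_iᵀ L ω) δ`. -/
noncomputable def upperQuantile {Ω : Type*} [MeasurableSpace Ω] (μ : Measure Ω) (g : Ω → ℝ)
    (ε : ENNReal) : ℝ :=
  sInf {t : ℝ | μ {ω | t < g ω} ≤ ε}

section Quantile

variable {Ω : Type*} [MeasurableSpace Ω] {μ : Measure Ω} {g : Ω → ℝ} {ε : ENNReal}

theorem bddBelow_setOf_measure_lt_le (hε : ε < μ Set.univ) :
    BddBelow {t : ℝ | μ {ω | t < g ω} ≤ ε} := by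
  have hmono : Monotone fun s : ℝ => {ω | -s < g ω} :=
    fun s s' hs ω hω => (neg_le_neg hs).trans_lt hω
  have hunion : (⋃ s : ℝ, {ω | -s < g ω}) = Set.univ :=
    Set.eq_univ_of_forall fun ω => Set.mem_iUnion.2 ⟨-g ω + 1, by simp⟩
  rw [← hunion, hmono.measure_iUnion] at hε
  obtain ⟨s, hs⟩ := lt_iSup_iff.1 hε
  refine ⟨-s, fun t ht => ?_⟩
  by_contra! hts
  exact hs.not_ge ((measure_mono fun ω (hω : -s < g ω) => hts.trans hω).trans ht)

theorem upperQuantile_le {t : ℝ} (hε : ε < μ Set.univ) (ht : μ {ω | t < g ω} ≤ ε) :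
    upperQuantile μ g ε ≤ t :=
  csInf_le (bddBelow_setOf_measure_lt_le hε) ht

end Quantile

theorem stmt_11_general {Ω : Type*} [MeasurableSpace Ω] (μ : Measure Ω) [IsProbabilityMeasure μ]
    (dx dl N : ℕ) (hN : 0 < N) (L : Ω → Fin dl → ℝ)
    (a : Fin N → Fin dl → ℝ) (b : Fin N → Fin dx → ℝ) (c : Fin N → ℝ) (C : ℝ)
    (φ : (Fin dx → ℝ) → (Fin dl → ℝ) → ℝ)
    (hminor : ∀ x l, (⨆ i : Fin N, (a i ⬝ᵥ l + b i ⬝ᵥ x + c i)) ≤ φ x l)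
    (himp : ∀ x l, (⨆ i : Fin N, (a i ⬝ᵥ l + b i ⬝ᵥ x + c i)) ≤ -C → φ x l ≤ 0)
    (δ : ℝ) (hδ : δ ∈ Set.Ioo (0 : ℝ) 1) :
    (∀ x : Fin dx → ℝ, μ {ω | 0 < φ x (L ω)} ≤ ENNReal.ofReal δ →
      ∀ i : Fin N,
        b i ⬝ᵥ x + c i +
          sInf {t : ℝ | μ {ω | t < a i ⬝ᵥ L ω} ≤ ENNReal.ofReal δ} ≤ 0) ∧
    (∀ x : Fin dx → ℝ,
      (∀ i : Fin N,
        b i ⬝ᵥ x + c i +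
          sInf {t : ℝ | μ {ω | t < a i ⬝ᵥ L ω} ≤ ENNReal.ofReal δ} ≤ 0) →
      ∀ l : Fin dl → ℝ, 0 < φ x l →
        ∃ i : Fin N,
          sInf {t : ℝ | μ {ω | t < a i ⬝ᵥ L ω} ≤ ENNReal.ofReal δ} <
            a i ⬝ᵥ l + C) := by
  have : NeZero N := ⟨hN.ne'⟩
  have hδ_lt : ENNReal.ofReal δ < μ Set.univ := by
    simpa [measure_univ] using ENNReal.ofReal_lt_one.2 hδ.2
  refine ⟨fun x hx i => ?_, fun x hx l hφ => ?_⟩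
  · have hsub : {ω | -(b i ⬝ᵥ x + c i) < a i ⬝ᵥ L ω} ⊆ {ω | 0 < φ x (L ω)} := fun ω hω => by
      have := le_ciSup (Finite.bddAbove_range fun j => a j ⬝ᵥ L ω + b j ⬝ᵥ x + c j) i
      have := hminor x (L ω)
      simp only [Set.mem_ofPred_eq] at hω ⊢
      linarith
    have := upperQuantile_le (g := fun ω => a i ⬝ᵥ L ω) hδ_lt ((measure_mono hsub).trans hx)
    exact (le_neg_iff_add_nonpos_left).1 this
  · obtain ⟨i, hi⟩ := exists_eq_ciSup_of_finite (f := fun j => a j ⬝ᵥ l + b j ⬝ᵥ x + c j)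
    have hsup : -C < ⨆ j, (a j ⬝ᵥ l + b j ⬝ᵥ x + c j) :=
      lt_of_not_ge fun h => (himp x l h).not_gt hφ
    exact ⟨i, by linarith [hx i]⟩

/-- For a piecewise affine minorant φ₋ of φ, with quantiles q_i(δ):
(a) every x with P(φ(x,L) > 0) ≤ δ lies in O_δ, and
(b) for x ∈ O_δ, φ(x,l) > 0 implies l ∈ C_δ. -/
theorem stmt_11 {Ω : Type*} [MeasurableSpace Ω] (μ : Measure Ω) [IsProbabilityMeasure μ]
    (dx dl N : ℕ) (hN : 0 < N) (L : Ω → Fin dl → ℝ) (hL : Measurable L)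
    (a : Fin N → Fin dl → ℝ) (b : Fin N → Fin dx → ℝ) (c : Fin N → ℝ) (C : ℝ)
    (φ : (Fin dx → ℝ) → (Fin dl → ℝ) → ℝ)
    (hminor : ∀ x l, (⨆ i : Fin N, (a i ⬝ᵥ l + b i ⬝ᵥ x + c i)) ≤ φ x l)
    (himp : ∀ x l, (⨆ i : Fin N, (a i ⬝ᵥ l + b i ⬝ᵥ x + c i)) ≤ -C → φ x l ≤ 0)
    (δ : ℝ) (hδ : δ ∈ Set.Ioo (0 : ℝ) 1) :
    (∀ x : Fin dx → ℝ, μ {ω | 0 < φ x (L ω)} ≤ ENNReal.ofReal δ →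
      ∀ i : Fin N,
        b i ⬝ᵥ x + c i +
          sInf {t : ℝ | μ {ω | t < a i ⬝ᵥ L ω} ≤ ENNReal.ofReal δ} ≤ 0) ∧
    (∀ x : Fin dx → ℝ,
      (∀ i : Fin N,
        b i ⬝ᵥ x + c i +
          sInf {t : ℝ | μ {ω | t < a i ⬝ᵥ L ω} ≤ ENNReal.ofReal δ} ≤ 0) →
      ∀ l : Fin dl → ℝ, 0 < φ x l →
        ∃ i : Fin N,
          sInf {t : ℝ | μ {ω | t < a i ⬝ᵥ L ω} ≤ ENNReal.ofReal δ} <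
            a i ⬝ᵥ l + C) :=
  stmt_11_general μ dx dl N hN L a b c C φ hminor himp δ hδ
end
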